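/- If 0 < ε L < γ and the step size η satisfies 0 < η < 2(γ − εL)/(L²(1 − ε²)) with 0 ≤ ε < 1, then α := √(1 − 2ηγ + η²L²) + ηεL < 1. -/

import Mathlib

/-!
Write `c = εL`. Moving `ηc` to the right and squaring (legitimate once `ηc < 1`), the claim
`√(1 - 2ηγ + η²L²) < 1 - ηc` becomes `η (L² - c²) < 2 (γ - c)`, which is the step-size
condition `η < 2(γ - εL) / (L²(1 - ε²))` cleared of its denominator.
-/

theorem mul_lt_one_of_mul_sq_sub_sq_lt {γ L c η : ℝ} (hc : 0 ≤ c) (hcγ : c < γ) (hγL : γ ≤ L)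
    (hη : η * (L ^ 2 - c ^ 2) < 2 * (γ - c)) : η * c < 1 := by
  have hLc : 0 < L ^ 2 - c ^ 2 := by nlinarith
  -- `2c(γ - c) ≤ L² - c²` since `L² - c² - 2c(γ - c) ≥ (L - c)²`
  have hbound : 2 * c * (γ - c) ≤ L ^ 2 - c ^ 2 := by nlinarith [sq_nonneg (L - c)]
  nlinarith

theorem sqrt_one_sub_two_mul_add_sq_add_mul_lt_one {γ L c η : ℝ} (hc : 0 ≤ c) (hcγ : c < γ)
    (hγL : γ ≤ L) (hη0 : 0 < η) (hη : η * (L ^ 2 - c ^ 2) < 2 * (γ - c)) :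
    √(1 - 2 * η * γ + η ^ 2 * L ^ 2) + η * c < 1 := by
  have hηc : η * c < 1 := mul_lt_one_of_mul_sq_sub_sq_lt hc hcγ hγL hη
  have hsq : 1 - 2 * η * γ + η ^ 2 * L ^ 2 < (1 - η * c) ^ 2 := by nlinarith
  have hsqrt := (Real.sqrt_lt' (by linarith)).2 hsq
  linarith

/-- the contraction factor `α = √(1 − 2ηγ + η²L²) + ηεL` of the
equilibrium primal-dual algorithm is strictly less than one under the stated
step-size condition.  (The inequality `γ ≤ L` is implicit in the paper, since
`γ` is the strong-monotonicity and `L` the Lipschitz constant of one map.) -/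
theorem stmt_1 (γ L ε η : ℝ)
    (hL : 0 < L) (hεL : 0 < ε * L) (hεLγ : ε * L < γ) (hγL : γ ≤ L)
    (hε0 : 0 ≤ ε) (hε1 : ε < 1)
    (hη0 : 0 < η) (hη : η < 2 * (γ - ε * L) / (L ^ 2 * (1 - ε ^ 2))) :
    Real.sqrt (1 - 2 * η * γ + η ^ 2 * L ^ 2) + η * ε * L < 1 := by
  have hden : 0 < L ^ 2 * (1 - ε ^ 2) :=
    mul_pos (pow_pos hL 2) (sub_pos.2 (pow_lt_one₀ hε0 hε1 two_ne_zero))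
  have hη' : η * (L ^ 2 - (ε * L) ^ 2) < 2 * (γ - ε * L) := by
    rw [lt_div_iff₀ hden] at hη
    linarith
  rw [mul_assoc η ε L]
  exact sqrt_one_sub_two_mul_add_sq_add_mul_lt_one hεL.le hεLγ hγL hη0 hη'
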